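/- Let $1 < q < 2$, let $v_n^{(1)} \to w$ strongly in $L^q(B_r)$ for every $r > 0$ (i.e. $1_{B_r}v_n^{(1)} \to 1_{B_r}w$ in $L^q(\mathbb{R}^N)$), let $w \in L^q(\mathbb{R}^N)$, and set $v_n^{(2)} = v_n^{(1)} - w$. Then $|v_n^{(2)}|^{q-2}v_n^{(2)} - |v_n^{(1)}|^{q-2}v_n^{(1)} + |w|^{q-2}w \to 0$ strongly in $L^{q/(q-1)}(\mathbb{R}^N)$ as $n \to \infty$. -/

import Mathlib

open MeasureTheory Filter

/-!
Write `J(t) = |t|^(q-2) t` for the duality map. Since `J` is Hölder continuous of exponent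
`q - 1`, the defect `J(u - c) - J(u) + J(c)` is bounded both by `3 |u - c|^(q-1)` and by
`3 |c|^(q-1)`. Raised to the power `q/(q-1)`, its integral is therefore controlled on a ball by
`∫_{B_r} |v_n - w|^q → 0`, and off the ball by `∫_{B_rᶜ} |w|^q`, which is small for large `r`.

Only `|v_n|` and `|w|` are known to be measurable. When the defect is integrable, `v_n - w` is
measurable nonetheless: `v_n w` can be read off `|v_n|`, `|w|` and the square of the defect,
because for `a, b > 0` the squared defect takes strictly different values at `(a, b)` and
`(a, -b)`, by strict concavity of `t ↦ t^(q-1)`. When the defect is not integrable, its integral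
is `0`.
-/

lemma Real.rpow_add_le_mul_rpow_add_rpow {p x y : ℝ} (hx : 0 ≤ x) (hy : 0 ≤ y) (hp : 1 ≤ p) :
    (x + y) ^ p ≤ 2 ^ (p - 1) * (x ^ p + y ^ p) := by
  lift x to NNReal using hx
  lift y to NNReal using hy
  exact_mod_cast NNReal.rpow_add_le_mul_rpow_add_rpow x y hp

noncomputable def dualityMap (q t : ℝ) : ℝ := |t| ^ (q - 2) * t

section dualityMap

variable {q : ℝ}

@[simp]
lemma dualityMap_zero (q : ℝ) : dualityMap q 0 = 0 := by simp [dualityMap]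

@[simp]
lemma dualityMap_neg (q t : ℝ) : dualityMap q (-t) = -dualityMap q t := by
  simp [dualityMap]

lemma dualityMap_of_nonneg (hq : q ≠ 1) {t : ℝ} (ht : 0 ≤ t) :
    dualityMap q t = t ^ (q - 1) := by
  rcases ht.eq_or_lt with rfl | ht
  · rw [dualityMap_zero, Real.zero_rpow (sub_ne_zero.2 hq)]
  · rw [dualityMap, abs_of_pos ht, ← Real.rpow_add_one ht.ne']
    ring_nf

lemma dualityMap_of_nonpos (hq : q ≠ 1) {t : ℝ} (ht : t ≤ 0) :
    dualityMap q t = -(-t) ^ (q - 1) := by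
  rw [← dualityMap_of_nonneg hq (neg_nonneg.2 ht), dualityMap_neg, neg_neg]

lemma abs_dualityMap (hq : q ≠ 1) (t : ℝ) : |dualityMap q t| = |t| ^ (q - 1) := by
  rcases le_total 0 t with ht | ht
  · rw [dualityMap_of_nonneg hq ht, abs_of_nonneg ht, abs_of_nonneg (Real.rpow_nonneg ht _)]
  · rw [dualityMap_of_nonpos hq ht, abs_neg, abs_of_nonpos ht,
      abs_of_nonneg (Real.rpow_nonneg (neg_nonneg.2 ht) _)]

lemma measurable_dualityMap (q : ℝ) : Measurable (dualityMap q) :=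
  (measurable_abs.pow_const _).mul measurable_id

lemma abs_dualityMap_sub_le_of_nonneg (hq1 : 1 < q) (hq2 : q ≤ 2) {a b : ℝ} (hb : 0 ≤ b)
    (hba : b ≤ a) : |dualityMap q a - dualityMap q b| ≤ (a - b) ^ (q - 1) := by
  have hα : 0 ≤ q - 1 := by linarith
  rw [dualityMap_of_nonneg hq1.ne' (hb.trans hba), dualityMap_of_nonneg hq1.ne' hb,
    abs_of_nonneg (sub_nonneg.2 (Real.rpow_le_rpow hb hba hα))]
  have := Real.rpow_add_le_add_rpow (sub_nonneg.2 hba) hb hα (by linarith)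
  rw [sub_add_cancel] at this
  linarith

lemma abs_dualityMap_sub_le (hq1 : 1 < q) (hq2 : q ≤ 2) (a b : ℝ) :
    |dualityMap q a - dualityMap q b| ≤ 2 * |a - b| ^ (q - 1) := by
  wlog hba : b ≤ a generalizing a b
  · rw [abs_sub_comm, abs_sub_comm a b]
    exact this b a (le_of_not_ge hba)
  have hα : 0 ≤ q - 1 := by linarith
  rw [abs_of_nonneg (sub_nonneg.2 hba)]
  have hd : 0 ≤ (a - b) ^ (q - 1) := Real.rpow_nonneg (sub_nonneg.2 hba) _
  rcases le_or_gt 0 b with hb | hb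
  · linarith [abs_dualityMap_sub_le_of_nonneg hq1 hq2 hb hba]
  rcases le_or_gt a 0 with ha | ha
  · have := abs_dualityMap_sub_le_of_nonneg hq1 hq2 (neg_nonneg.2 ha) (neg_le_neg hba)
    rw [dualityMap_neg, dualityMap_neg, neg_sub_neg, neg_sub_neg] at this
    linarith
  · have h₀ : 0 ≤ (-b) ^ (q - 1) := Real.rpow_nonneg (by linarith) _
    rw [dualityMap_of_nonneg hq1.ne' ha.le, dualityMap_of_nonpos hq1.ne' hb.le, sub_neg_eq_add,
      abs_of_nonneg (add_nonneg (Real.rpow_nonneg ha.le _) h₀)]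
    have h₁ : a ^ (q - 1) ≤ (a - b) ^ (q - 1) := Real.rpow_le_rpow ha.le (by linarith) hα
    have h₂ : (-b) ^ (q - 1) ≤ (a - b) ^ (q - 1) :=
      Real.rpow_le_rpow (by linarith) (by linarith) hα
    linarith

noncomputable def dualityMapDefect (q u c : ℝ) : ℝ :=
  dualityMap q (u - c) - dualityMap q u + dualityMap q c

lemma dualityMapDefect_neg_neg (q u c : ℝ) :
    dualityMapDefect q (-u) (-c) = -dualityMapDefect q u c := by
  simp only [dualityMapDefect, neg_sub_neg, ← neg_sub u c, dualityMap_neg]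
  ring

lemma abs_dualityMapDefect_le_sub (hq1 : 1 < q) (hq2 : q ≤ 2) (u c : ℝ) :
    |dualityMapDefect q u c| ≤ 3 * |u - c| ^ (q - 1) := by
  calc |dualityMapDefect q u c|
      ≤ |dualityMap q (u - c)| + |dualityMap q u - dualityMap q c| := by
        rw [dualityMapDefect, sub_add]; exact abs_sub _ _
    _ ≤ |u - c| ^ (q - 1) + 2 * |u - c| ^ (q - 1) := by
        rw [abs_dualityMap hq1.ne']; gcongr; exact abs_dualityMap_sub_le hq1 hq2 u c
    _ = 3 * |u - c| ^ (q - 1) := by ring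

lemma abs_dualityMapDefect_le_right (hq1 : 1 < q) (hq2 : q ≤ 2) (u c : ℝ) :
    |dualityMapDefect q u c| ≤ 3 * |c| ^ (q - 1) := by
  calc |dualityMapDefect q u c|
      ≤ |dualityMap q (u - c) - dualityMap q u| + |dualityMap q c| := abs_add_le _ _
    _ ≤ 2 * |c| ^ (q - 1) + |c| ^ (q - 1) := by
        rw [abs_dualityMap hq1.ne']; gcongr
        simpa using abs_dualityMap_sub_le hq1 hq2 (u - c) u
    _ = 3 * |c| ^ (q - 1) := by ring

lemma abs_rpow_div_sub_one_le_of_le {q K t F : ℝ} (hq : 1 < q) (hK : 0 ≤ K) (ht : 0 ≤ t)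
    (hF : |F| ≤ K * t ^ (q - 1)) : |F| ^ (q / (q - 1)) ≤ K ^ (q / (q - 1)) * t ^ q := by
  have hq' : q - 1 ≠ 0 := by linarith
  calc |F| ^ (q / (q - 1)) ≤ (K * t ^ (q - 1)) ^ (q / (q - 1)) := by gcongr
    _ = K ^ (q / (q - 1)) * t ^ q := by
        rw [Real.mul_rpow hK (Real.rpow_nonneg ht _), ← Real.rpow_mul ht, mul_div_cancel₀ _ hq']

lemma dualityMap_sub_add_dualityMap_add_lt (hq1 : 1 < q) (hq2 : q < 2) {a b : ℝ} (ha : 0 < a)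
    (hb : 0 < b) :
    dualityMap q (a - b) + dualityMap q (a + b) < 2 * a ^ (q - 1) := by
  have hα₀ : 0 < q - 1 := by linarith
  have hα₁ : q - 1 < 1 := by linarith
  rw [dualityMap_of_nonneg hq1.ne' (by linarith : 0 ≤ a + b)]
  rcases lt_or_ge b a with hba | hab
  · rw [dualityMap_of_nonneg hq1.ne' (by linarith : 0 ≤ a - b)]
    have := (Real.strictConcaveOn_rpow hα₀ hα₁).2 (Set.mem_Ici.2 (by linarith : 0 ≤ a - b))
      (Set.mem_Ici.2 (by linarith : 0 ≤ a + b)) (by linarith) (by norm_num : (0 : ℝ) < 1 / 2)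
      (by norm_num : (0 : ℝ) < 1 / 2) (by norm_num)
    simp only [smul_eq_mul] at this
    rw [show 1 / 2 * (a - b) + 1 / 2 * (a + b) = a by ring] at this
    linarith
  · rw [dualityMap_of_nonpos hq1.ne' (by linarith : a - b ≤ 0), neg_sub]
    have h₁ := Real.rpow_add_le_add_rpow (by linarith : 0 ≤ b - a) (by linarith : 0 ≤ 2 * a)
      hα₀.le hα₁.le
    have h₂ : (2 * a) ^ (q - 1) < 2 * a ^ (q - 1) := by
      rw [Real.mul_rpow zero_le_two ha.le]
      gcongr
      simpa using Real.rpow_lt_rpow_of_exponent_lt one_lt_two hα₁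
    rw [show b - a + 2 * a = a + b by ring] at h₁
    linarith

lemma sq_dualityMapDefect_lt_sq_neg (hq1 : 1 < q) (hq2 : q < 2) {a b : ℝ} (ha : 0 < a)
    (hb : 0 < b) : dualityMapDefect q a b ^ 2 < dualityMapDefect q a (-b) ^ 2 := by
  have hsum := dualityMap_sub_add_dualityMap_add_lt hq1 hq2 ha hb
  have hdiff := dualityMap_sub_add_dualityMap_add_lt hq1 hq2 hb ha
  rw [← neg_sub, dualityMap_neg, add_comm b] at hdiff
  rw [← dualityMap_of_nonneg hq1.ne' ha.le] at hsum
  rw [← dualityMap_of_nonneg hq1.ne' hb.le] at hdiff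
  rw [← neg_sq (dualityMapDefect q a (-b))]
  refine sq_lt_sq' ?_ ?_ <;>
    simp only [dualityMapDefect, sub_neg_eq_add, dualityMap_neg] <;> linarith

lemma mul_eq_ite_dualityMapDefect (hq1 : 1 < q) (hq2 : q < 2) (u c : ℝ) :
    u * c = if dualityMapDefect q u c ^ 2 <
        (dualityMapDefect q |u| |c| ^ 2 + dualityMapDefect q |u| (-|c|) ^ 2) / 2
      then |u| * |c| else -(|u| * |c|) := by
  wlog hu : 0 ≤ u generalizing u c
  · have := this (-u) (-c) (by linarith)
    rwa [neg_mul_neg, abs_neg, abs_neg, dualityMapDefect_neg_neg, neg_sq] at this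
  rw [abs_of_nonneg hu]
  rcases hu.eq_or_lt with rfl | hu
  · simp
  rcases lt_trichotomy c 0 with hc | rfl | hc
  · have := sq_dualityMapDefect_lt_sq_neg hq1 hq2 hu (neg_pos.2 hc)
    rw [neg_neg] at this
    rw [abs_of_neg hc, neg_neg, if_neg (by linarith)]
    ring
  · simp
  · have := sq_dualityMapDefect_lt_sq_neg hq1 hq2 hu hc
    rw [abs_of_pos hc, if_pos (by linarith)]

lemma measurable_dualityMapDefect (q : ℝ) :
    Measurable fun p : ℝ × ℝ => dualityMapDefect q p.1 p.2 :=
  ((measurable_dualityMap q).comp (measurable_fst.sub measurable_snd)).sub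
    ((measurable_dualityMap q).comp measurable_fst) |>.add
    ((measurable_dualityMap q).comp measurable_snd)

end dualityMap

section Integrals

variable {X : Type*} [MeasurableSpace X] {μ : Measure X}

lemma AEMeasurable.abs_of_abs_rpow {s : ℝ} (hs : s ≠ 0) {f : X → ℝ}
    (h : AEMeasurable (fun x => |f x| ^ s) μ) : AEMeasurable (fun x => |f x|) μ := by
  refine (h.pow_const s⁻¹).congr (ae_of_all _ fun x => ?_)
  exact Real.rpow_rpow_inv (abs_nonneg _) hs

lemma AEMeasurable.mul_of_dualityMapDefect {q : ℝ} (hq1 : 1 < q) (hq2 : q < 2) {u c : X → ℝ}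
    (hu : AEMeasurable (fun x => |u x|) μ) (hc : AEMeasurable (fun x => |c x|) μ)
    (hD : AEMeasurable (fun x => dualityMapDefect q (u x) (c x) ^ 2) μ) :
    AEMeasurable (fun x => u x * c x) μ := by
  have hD' := measurable_dualityMapDefect q
  have hm : Measurable fun p : ℝ × ℝ × ℝ =>
      if p.2.2 < (dualityMapDefect q p.1 p.2.1 ^ 2 + dualityMapDefect q p.1 (-p.2.1) ^ 2) / 2
      then p.1 * p.2.1 else -(p.1 * p.2.1) := by
    refine Measurable.ite (measurableSet_lt (by fun_prop) ?_) (by fun_prop) (by fun_prop)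
    exact (((hD'.comp (measurable_fst.prodMk measurable_snd.fst)).pow_const (2 : ℕ)).add
      ((hD'.comp (measurable_fst.prodMk measurable_snd.fst.neg)).pow_const (2 : ℕ))).div_const 2
  exact (hm.comp_aemeasurable (hu.prodMk (hc.prodMk hD))).congr
    (ae_of_all _ fun x => (mul_eq_ite_dualityMapDefect hq1 hq2 (u x) (c x)).symm)

lemma integrable_abs_sub_rpow_of_dualityMapDefect {q : ℝ} (hq1 : 1 < q) (hq2 : q < 2)
    {u c : X → ℝ} (hu : Integrable (fun x => |u x| ^ q) μ)
    (hc : Integrable (fun x => |c x| ^ q) μ)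
    (hD : AEMeasurable (fun x => |dualityMapDefect q (u x) (c x)| ^ (q / (q - 1))) μ) :
    Integrable (fun x => |u x - c x| ^ q) μ := by
  have hq0 : q ≠ 0 := by linarith
  have hu' := hu.aemeasurable.abs_of_abs_rpow hq0
  have hc' := hc.aemeasurable.abs_of_abs_rpow hq0
  have hmul := AEMeasurable.mul_of_dualityMapDefect hq1 hq2 hu' hc'
    (by simpa only [sq_abs] using
      (hD.abs_of_abs_rpow (div_ne_zero hq0 (by linarith))).pow_const (2 : ℕ))
  have hsub : AEMeasurable (fun x => |u x - c x|) μ := by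
    refine ((((hu'.pow_const (2 : ℕ)).sub (hmul.const_mul 2)).add
      (hc'.pow_const (2 : ℕ))).sqrt).congr (ae_of_all _ fun x => ?_)
    simp only [Pi.add_apply, Pi.sub_apply, sq_abs]
    rw [← Real.sqrt_sq_eq_abs]
    ring_nf
  refine ((hu.add hc).const_mul (2 ^ (q - 1))).mono' (hsub.pow_const q).aestronglyMeasurable
    (ae_of_all _ fun x => ?_)
  rw [Real.norm_of_nonneg (Real.rpow_nonneg (abs_nonneg _) _)]
  calc |u x - c x| ^ q ≤ (|u x| + |c x|) ^ q := by gcongr; exact abs_sub _ _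
    _ ≤ 2 ^ (q - 1) * (|u x| ^ q + |c x| ^ q) :=
      Real.rpow_add_le_mul_rpow_add_rpow (abs_nonneg _) (abs_nonneg _) hq1.le

lemma tendsto_setIntegral_compl_of_monotone {h : X → ℝ} {s : ℕ → Set X}
    (hs : ∀ k, MeasurableSet (s k)) (hmono : Monotone s) (hunion : ⋃ k, s k = Set.univ)
    (hh : Integrable h μ) : Tendsto (fun k => ∫ x in (s k)ᶜ, h x ∂μ) atTop (nhds 0) := by
  have := tendsto_setIntegral_of_antitone (fun k => (hs k).compl)
    (fun _ _ hij => Set.compl_subset_compl.2 (hmono hij)) ⟨0, hh.integrableOn⟩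
  rwa [← Set.compl_iUnion, hunion, Set.compl_univ, Measure.restrict_empty,
    integral_zero_measure] at this

lemma tendsto_integral_of_le_local_of_le_tail {f g : ℕ → X → ℝ} {h : X → ℝ}
    {s : ℕ → Set X} {C : ℝ} (hs : ∀ k, MeasurableSet (s k)) (hmono : Monotone s)
    (hunion : ⋃ k, s k = Set.univ) (hf : ∀ n x, 0 ≤ f n x)
    (hfg : ∀ n x, f n x ≤ C * g n x) (hfh : ∀ n x, f n x ≤ C * h x)
    (hh : Integrable h μ) (hg : ∀ n, Integrable (f n) μ → Integrable (g n) μ)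
    (hloc : ∀ k, Tendsto (fun n => ∫ x in s k, g n x ∂μ) atTop (nhds 0)) :
    Tendsto (fun n => ∫ x, f n x ∂μ) atTop (nhds 0) := by
  refine tendsto_order.2 ⟨fun ε hε => .of_forall fun n => hε.trans_le (integral_nonneg (hf n)),
    fun ε hε => ?_⟩
  have hε2 : C * 0 < ε / 2 := by linarith
  obtain ⟨k, hk⟩ := ((tendsto_setIntegral_compl_of_monotone hs hmono hunion hh).const_mul C
    |>.eventually (gt_mem_nhds hε2)).exists
  filter_upwards [(hloc k).const_mul C |>.eventually (gt_mem_nhds hε2)] with n hn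
  by_cases hfi : Integrable (f n) μ
  swap
  · rwa [integral_undef hfi]
  calc ∫ x, f n x ∂μ = ∫ x in s k, f n x ∂μ + ∫ x in (s k)ᶜ, f n x ∂μ :=
        (integral_add_compl (hs k) hfi).symm
    _ ≤ ∫ x in s k, C * g n x ∂μ + ∫ x in (s k)ᶜ, C * h x ∂μ :=
        add_le_add (setIntegral_mono hfi.integrableOn ((hg n hfi).const_mul C).integrableOn (hfg n))
          (setIntegral_mono hfi.integrableOn (hh.const_mul C).integrableOn (hfh n))
    _ < ε := by rw [integral_const_mul, integral_const_mul]; linarith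

end Integrals

theorem stmt_15_general {N : ℕ} (q : ℝ) (hq1 : 1 < q) (hq2 : q < 2)
    (v₁ : ℕ → EuclideanSpace ℝ (Fin N) → ℝ)
    (w : EuclideanSpace ℝ (Fin N) → ℝ)
    (hw : Integrable (fun x => |w x| ^ q) (volume : Measure (EuclideanSpace ℝ (Fin N))))
    (hv₁int : ∀ n, Integrable (fun x => |v₁ n x| ^ q)
      (volume : Measure (EuclideanSpace ℝ (Fin N))))
    (hloc : ∀ r : ℝ, 0 < r →
      Filter.Tendsto (fun n => ∫ x in Metric.ball (0 : EuclideanSpace ℝ (Fin N)) r,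
        |v₁ n x - w x| ^ q) Filter.atTop (nhds 0)) :
    Filter.Tendsto (fun n => ∫ x,
        |(|v₁ n x - w x| ^ (q - 2) * (v₁ n x - w x)
          - |v₁ n x| ^ (q - 2) * v₁ n x
          + |w x| ^ (q - 2) * w x)| ^ (q / (q - 1)))
      Filter.atTop (nhds 0) := by
  change Tendsto (fun n => ∫ x, |dualityMapDefect q (v₁ n x) (w x)| ^ (q / (q - 1))) atTop
    (nhds 0)
  refine tendsto_integral_of_le_local_of_le_tail (fun _ => measurableSet_ball)
    (fun _ _ hij => Metric.ball_subset_ball (by gcongr)) (Metric.iUnion_ball_nat_succ 0)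
    (fun _ _ => by positivity)
    (fun _ _ => abs_rpow_div_sub_one_le_of_le hq1 zero_le_three (abs_nonneg _)
      (abs_dualityMapDefect_le_sub hq1 hq2.le _ _))
    (fun _ _ => abs_rpow_div_sub_one_le_of_le hq1 zero_le_three (abs_nonneg _)
      (abs_dualityMapDefect_le_right hq1 hq2.le _ _)) hw
    (fun n hn => integrable_abs_sub_rpow_of_dualityMapDefect hq1 hq2 (hv₁int n) hw
      hn.aemeasurable)
    (fun k => hloc _ k.cast_add_one_pos)

theorem stmt_15 {N : ℕ} (hN : 2 ≤ N) (q : ℝ) (hq1 : 1 < q) (hq2 : q < 2)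
    (v₁ : ℕ → EuclideanSpace ℝ (Fin N) → ℝ)
    (w : EuclideanSpace ℝ (Fin N) → ℝ)
    (hw : Integrable (fun x => |w x| ^ q) (volume : Measure (EuclideanSpace ℝ (Fin N))))
    (hv₁int : ∀ n, Integrable (fun x => |v₁ n x| ^ q)
      (volume : Measure (EuclideanSpace ℝ (Fin N))))
    (hloc : ∀ r : ℝ, 0 < r →
      Filter.Tendsto (fun n => ∫ x in Metric.ball (0 : EuclideanSpace ℝ (Fin N)) r,
        |v₁ n x - w x| ^ q) Filter.atTop (nhds 0)) :
    Filter.Tendsto (fun n => ∫ x,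
        |(|v₁ n x - w x| ^ (q - 2) * (v₁ n x - w x)
          - |v₁ n x| ^ (q - 2) * v₁ n x
          + |w x| ^ (q - 2) * w x)| ^ (q / (q - 1)))
      Filter.atTop (nhds 0) :=
  stmt_15_general q hq1 hq2 v₁ w hw hv₁int hloc
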